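/- Let N be even and F_{nm} the N×N matrix given by: for n even, F_{nm} = ∑_{a=0}^{N/2−1} (F^N)⁻¹_{na} · G_{am}; for n odd, F_{nm} = e^{iπ(n−2m)/N} ∑_{a=0}^{N/2−1} (F^N)⁻¹_{na} G_{am} when 0 ≤ m < N/2, and e^{iπ(n−(2m−N))/N} ∑_{a=N/2}^{N−1} (F^N)⁻¹_{na} G'_{am} when N/2 ≤ m < N, where G is the block-diagonal matrix diag(F^{N/2}, F^{N/2}). Then this matrix is unitary. -/

import Mathlib

open Finset

/-- The `N×N` discrete Fourier block matrix `G = diag(F^{N/2}, F^{N/2})`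
for `N = 2M`. -/
noncomputable def fourierBlock (M : ℕ) : Matrix (Fin (2 * M)) (Fin (2 * M)) ℂ :=
  Matrix.of fun a m =>
    if (a : ℕ) < M ∧ (m : ℕ) < M then
      Complex.exp (-2 * Real.pi * Complex.I * a * m / M) / Real.sqrt M
    else if M ≤ (a : ℕ) ∧ M ≤ (m : ℕ) then
      Complex.exp (-2 * Real.pi * Complex.I * ((a : ℂ) - M) * ((m : ℂ) - M) / M) /
        Real.sqrt M
    else 0

/-- The corrected Balazs–Voros baker's-map matrix, `N = 2M`:
for `n` even, `B_{nm} = ∑_a (F^N)⁻¹_{na} G_{am}`; for `n` odd it carries the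
extra phase `e^{iπ(n−2m)/N}` (for `m < N/2`) or `e^{iπ(n−(2m−N))/N}` (for `m ≥ N/2`),
where `(F^N)⁻¹_{na} = e^{2πina/N}/√N`. -/
noncomputable def bakerMatrix (M : ℕ) : Matrix (Fin (2 * M)) (Fin (2 * M)) ℂ :=
  Matrix.of fun n m =>
    (if Even (n : ℕ) then (1 : ℂ)
     else if (m : ℕ) < M then
       Complex.exp (Real.pi * Complex.I * ((n : ℂ) - 2 * m) / (2 * M))
     else
       Complex.exp (Real.pi * Complex.I * ((n : ℂ) - (2 * (m : ℂ) - 2 * M)) / (2 * M))) *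
      ∑ a : Fin (2 * M),
        (Complex.exp (2 * Real.pi * Complex.I * n * a / (2 * M)) / Real.sqrt (2 * M)) *
          fourierBlock M a m



lemma rootsum (K : ℕ) (hK : 0 < K) (t : ℤ) :
    ∑ a ∈ Finset.range K, Complex.exp (2 * Real.pi * Complex.I * t * a / K) =
      if (K : ℤ) ∣ t then (K : ℂ) else 0 := by
  have hKc : (K : ℂ) ≠ 0 := Nat.cast_ne_zero.2 hK.ne'
  have hpi2 : (2 * (Real.pi : ℂ) * Complex.I) ≠ 0 := by
    simp [Real.pi_ne_zero, Complex.I_ne_zero]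
  have hz : ∀ a ∈ Finset.range K, Complex.exp (2 * Real.pi * Complex.I * t * a / K)
      = Complex.exp (2 * Real.pi * Complex.I * t / K) ^ a := by
    intro a _
    rw [← Complex.exp_nat_mul]
    congr 1
    ring
  rw [Finset.sum_congr rfl hz]
  by_cases hdvd : (K : ℤ) ∣ t
  · rw [if_pos hdvd]
    obtain ⟨s, hs⟩ := hdvd
    subst hs
    have h1 : Complex.exp (2 * Real.pi * Complex.I * ((K : ℤ) * s : ℤ) / K) = 1 := by
      rw [show (2 * (Real.pi : ℂ) * Complex.I * (((K : ℤ) * s : ℤ) : ℂ) / K)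
          = (s : ℤ) * (2 * Real.pi * Complex.I) by
        push_cast; field_simp]
      exact Complex.exp_int_mul_two_pi_mul_I s
    push_cast at h1
    simp [h1]
  · rw [if_neg hdvd]
    have hne : Complex.exp (2 * Real.pi * Complex.I * t / K) ≠ 1 := by
      intro hyp
      rw [Complex.exp_eq_one_iff] at hyp
      obtain ⟨k, hk⟩ := hyp
      apply hdvd
      refine ⟨k, ?_⟩
      have h2 : (t : ℂ) = (K : ℂ) * k := by
        field_simp at hk
        have h3 : (2 * (Real.pi : ℂ) * Complex.I) * t
            = (2 * (Real.pi : ℂ) * Complex.I) * ((K : ℂ) * k) := by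
          linear_combination (2 * (Real.pi : ℂ) * Complex.I) * hk
        exact mul_left_cancel₀ hpi2 h3
      exact_mod_cast h2
    rw [geom_sum_eq hne]
    have hKpow : Complex.exp (2 * Real.pi * Complex.I * t / K) ^ K = 1 := by
      rw [← Complex.exp_nat_mul,
        show ((K : ℂ) * (2 * Real.pi * Complex.I * t / K)) = (t : ℤ) * (2 * Real.pi * Complex.I) by
          push_cast; field_simp]
      exact Complex.exp_int_mul_two_pi_mul_I t
    simp [hKpow]

lemma rootsum' (K : ℕ) (hK : 0 < K) (n n' : ℕ) (hn : n < K) (hn' : n' < K) :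
    ∑ a ∈ Finset.range K, Complex.exp (2 * Real.pi * Complex.I * ((n : ℂ) - n') * a / K) =
      if n = n' then (K : ℂ) else 0 := by
  have h0 : ∀ a ∈ Finset.range K, Complex.exp (2 * Real.pi * Complex.I * ((n : ℂ) - n') * a / K)
      = Complex.exp (2 * Real.pi * Complex.I * (((n : ℤ) - n' : ℤ) : ℂ) * a / K) := by
    intro a _; congr 2; push_cast; ring
  rw [Finset.sum_congr rfl h0, rootsum K hK ((n : ℤ) - n')]
  by_cases h : n = n'
  · simp [h]
  · rw [if_neg h, if_neg]
    intro hdvd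
    have ht0 : ((n : ℤ) - n') ≠ 0 := by
      intro h1; apply h; omega
    have h1 := Int.le_of_dvd (abs_pos.2 ht0) ((dvd_abs _ _).2 hdvd)
    have h2 : |(n : ℤ) - n'| < K := by
      rw [abs_lt]; constructor <;> omega
    linarith

lemma dft_orth_pos (K : ℕ) (hK : 0 < K) (p q : ℕ) (hp : p < K) (hq : q < K) :
    ∑ a ∈ Finset.range K,
      (Complex.exp (2 * Real.pi * Complex.I * p * a / K) / Real.sqrt K) *
        (starRingEnd ℂ) (Complex.exp (2 * Real.pi * Complex.I * q * a / K) / Real.sqrt K) =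
      if p = q then 1 else 0 := by
  have hKc : (K : ℂ) ≠ 0 := Nat.cast_ne_zero.2 hK.ne'
  have hsq : ((Real.sqrt K : ℝ) : ℂ) * ((Real.sqrt K : ℝ) : ℂ) = (K : ℂ) := by
    rw [← Complex.ofReal_mul, Real.mul_self_sqrt (Nat.cast_nonneg K)]
    simp
  have hterm : ∀ a ∈ Finset.range K,
      (Complex.exp (2 * Real.pi * Complex.I * p * a / K) / Real.sqrt K) *
        (starRingEnd ℂ) (Complex.exp (2 * Real.pi * Complex.I * q * a / K) / Real.sqrt K)
      = Complex.exp (2 * Real.pi * Complex.I * ((p : ℂ) - q) * a / K) / K := by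
    intro a _
    rw [map_div₀, ← Complex.exp_conj, Complex.conj_ofReal, div_mul_div_comm, hsq,
      ← Complex.exp_add]
    congr 1
    have hconj : (starRingEnd ℂ) (2 * (Real.pi : ℂ) * Complex.I * q * a / K)
        = -(2 * (Real.pi : ℂ) * Complex.I * q * a / K) := by
      simp [map_div₀, map_ofNat]
      ring
    rw [hconj]
    ring
  rw [Finset.sum_congr rfl hterm, ← Finset.sum_div, rootsum' K hK p q hp hq]
  by_cases h : p = q
  · rw [if_pos h, if_pos h, div_self hKc]
  · rw [if_neg h, if_neg h, zero_div]

lemma dft_orth_neg (K : ℕ) (hK : 0 < K) (p q : ℕ) (hp : p < K) (hq : q < K) :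
    ∑ a ∈ Finset.range K,
      (Complex.exp (-2 * Real.pi * Complex.I * p * a / K) / Real.sqrt K) *
        (starRingEnd ℂ) (Complex.exp (-2 * Real.pi * Complex.I * q * a / K) / Real.sqrt K) =
      if p = q then 1 else 0 := by
  have hKc : (K : ℂ) ≠ 0 := Nat.cast_ne_zero.2 hK.ne'
  have hsq : ((Real.sqrt K : ℝ) : ℂ) * ((Real.sqrt K : ℝ) : ℂ) = (K : ℂ) := by
    rw [← Complex.ofReal_mul, Real.mul_self_sqrt (Nat.cast_nonneg K)]
    simp
  have hterm : ∀ a ∈ Finset.range K,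
      (Complex.exp (-2 * Real.pi * Complex.I * p * a / K) / Real.sqrt K) *
        (starRingEnd ℂ) (Complex.exp (-2 * Real.pi * Complex.I * q * a / K) / Real.sqrt K)
      = Complex.exp (2 * Real.pi * Complex.I * ((q : ℂ) - p) * a / K) / K := by
    intro a _
    rw [map_div₀, ← Complex.exp_conj, Complex.conj_ofReal, div_mul_div_comm, hsq,
      ← Complex.exp_add]
    congr 1
    have hconj : (starRingEnd ℂ) (-2 * (Real.pi : ℂ) * Complex.I * q * a / K)
        = -(-2 * (Real.pi : ℂ) * Complex.I * q * a / K) := by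
      simp [map_div₀, map_ofNat]
      ring
    rw [hconj]
    ring
  rw [Finset.sum_congr rfl hterm, ← Finset.sum_div, rootsum' K hK q p hq hp]
  by_cases h : p = q
  · rw [if_pos h, if_pos h.symm, div_self hKc]
  · rw [if_neg h, if_neg (Ne.symm h), zero_div]


noncomputable def Fi (M n a : ℕ) : ℂ :=
  Complex.exp (2 * Real.pi * Complex.I * n * a / (2 * M)) / Real.sqrt (2 * M)

noncomputable def Gm (M a m : ℕ) : ℂ :=
  if a < M ∧ m < M then
    Complex.exp (-2 * Real.pi * Complex.I * a * m / M) / Real.sqrt M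
  else if M ≤ a ∧ M ≤ m then
    Complex.exp (-2 * Real.pi * Complex.I * ((a : ℂ) - M) * ((m : ℂ) - M) / M) / Real.sqrt M
  else 0

noncomputable def Am (M n m : ℕ) : ℂ := ∑ a ∈ Finset.range (2 * M), Fi M n a * Gm M a m

lemma exp_pi_even {n : ℕ} (h : Even n) : Complex.exp (Real.pi * Complex.I * n) = 1 := by
  obtain ⟨k, rfl⟩ := h
  rw [show (Real.pi * Complex.I * ((k + k : ℕ) : ℂ)) = (k : ℤ) * (2 * Real.pi * Complex.I) by
    push_cast; ring]
  exact Complex.exp_int_mul_two_pi_mul_I k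

lemma exp_pi_odd {n : ℕ} (h : Odd n) : Complex.exp (Real.pi * Complex.I * n) = -1 := by
  obtain ⟨k, rfl⟩ := h
  rw [show (Real.pi * Complex.I * ((2 * k + 1 : ℕ) : ℂ))
      = (k : ℤ) * (2 * Real.pi * Complex.I) + Real.pi * Complex.I by push_cast; ring,
    Complex.exp_add, Complex.exp_int_mul_two_pi_mul_I, Complex.exp_pi_mul_I, one_mul]

lemma Fi_shift (M n a : ℕ) (hM : 0 < M) :
    Fi M n (M + a) = Complex.exp (Real.pi * Complex.I * n) * Fi M n a := by
  have hMc : (M : ℂ) ≠ 0 := Nat.cast_ne_zero.2 hM.ne'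
  have h1 : Complex.exp (2 * Real.pi * Complex.I * n * ((M + a : ℕ) : ℂ) / (2 * M))
      = Complex.exp (Real.pi * Complex.I * n) * Complex.exp (2 * Real.pi * Complex.I * n * a / (2 * M)) := by
    rw [← Complex.exp_add]
    congr 1
    push_cast
    field_simp
  unfold Fi
  rw [h1, mul_div_assoc]

lemma Gm_shift (M a m : ℕ) (ha : a < M) (hm : m < M) :
    Gm M (M + a) (M + m) = Gm M a m := by
  unfold Gm
  rw [if_neg (by omega), if_pos ⟨by omega, by omega⟩, if_pos ⟨ha, hm⟩]
  congr 2
  push_cast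
  ring

lemma Gm_zero_left (M a m : ℕ) (ha : a < M) (hm : M ≤ m) : Gm M a m = 0 := by
  unfold Gm
  rw [if_neg (by omega), if_neg (by omega)]

lemma Gm_zero_right (M a m : ℕ) (ha : M ≤ a) (hm : m < M) : Gm M a m = 0 := by
  unfold Gm
  rw [if_neg (by omega), if_neg (by omega)]

lemma Am_shift (M n m : ℕ) (hM : 0 < M) (hm : m < M) :
    Am M n (M + m) = Complex.exp (Real.pi * Complex.I * n) * Am M n m := by
  unfold Am
  rw [two_mul, Finset.sum_range_add, Finset.sum_range_add]
  have hz1 : ∑ x ∈ Finset.range M, Fi M n x * Gm M x (M + m) = 0 :=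
    Finset.sum_eq_zero fun a ha => by
      rw [Gm_zero_left M a (M + m) (Finset.mem_range.1 ha) (by omega), mul_zero]
  have hz2 : ∑ x ∈ Finset.range M, Fi M n (M + x) * Gm M (M + x) m = 0 :=
    Finset.sum_eq_zero fun a ha => by
      rw [Gm_zero_right M (M + a) m (by omega) hm, mul_zero]
  have h3 : ∑ x ∈ Finset.range M, Fi M n (M + x) * Gm M (M + x) (M + m)
      = Complex.exp (Real.pi * Complex.I * n) * ∑ x ∈ Finset.range M, Fi M n x * Gm M x m := by
    rw [Finset.mul_sum]
    apply Finset.sum_congr rfl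
    intro a ha
    rw [Gm_shift M a m (Finset.mem_range.1 ha) hm, Fi_shift M n a hM]
    ring
  rw [hz1, hz2, h3, zero_add, mul_add, mul_zero, add_zero]

lemma Gm_orth (M : ℕ) (hM : 0 < M) (a b : ℕ) (ha : a < 2 * M) (hb : b < 2 * M) :
    ∑ m ∈ Finset.range (2 * M), Gm M a m * (starRingEnd ℂ) (Gm M b m) =
      if a = b then 1 else 0 := by
  rw [two_mul, Finset.sum_range_add]
  rcases lt_or_ge a M with haM | haM <;> rcases lt_or_ge b M with hbM | hbM
  · -- both < M
    have hz2 : ∑ m ∈ Finset.range M, Gm M a (M + m) * (starRingEnd ℂ) (Gm M b (M + m)) = 0 :=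
      Finset.sum_eq_zero fun m hm => by
        rw [Gm_zero_left M a (M + m) haM (by omega), zero_mul]
    have h1 : ∑ m ∈ Finset.range M, Gm M a m * (starRingEnd ℂ) (Gm M b m)
        = if a = b then 1 else 0 := by
      have hc : ∀ m ∈ Finset.range M, Gm M a m * (starRingEnd ℂ) (Gm M b m)
          = (Complex.exp (-2 * Real.pi * Complex.I * a * m / M) / Real.sqrt M) *
            (starRingEnd ℂ) (Complex.exp (-2 * Real.pi * Complex.I * b * m / M) / Real.sqrt M) := by
        intro m hm
        have hmM := Finset.mem_range.1 hm
        unfold Gm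
        rw [if_pos ⟨haM, hmM⟩, if_pos ⟨hbM, hmM⟩]
      rw [Finset.sum_congr rfl hc]
      exact dft_orth_neg M hM a b haM hbM
    rw [hz2, h1, add_zero]
  · -- a < M ≤ b
    rw [if_neg (by omega)]
    have hz1 : ∑ m ∈ Finset.range M, Gm M a m * (starRingEnd ℂ) (Gm M b m) = 0 :=
      Finset.sum_eq_zero fun m hm => by
        rw [Gm_zero_right M b m hbM (Finset.mem_range.1 hm), map_zero, mul_zero]
    have hz2 : ∑ m ∈ Finset.range M, Gm M a (M + m) * (starRingEnd ℂ) (Gm M b (M + m)) = 0 :=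
      Finset.sum_eq_zero fun m hm => by
        rw [Gm_zero_left M a (M + m) haM (by omega), zero_mul]
    rw [hz1, hz2, add_zero]
  · -- b < M ≤ a
    rw [if_neg (by omega)]
    have hz1 : ∑ m ∈ Finset.range M, Gm M a m * (starRingEnd ℂ) (Gm M b m) = 0 :=
      Finset.sum_eq_zero fun m hm => by
        rw [Gm_zero_right M a m haM (Finset.mem_range.1 hm), zero_mul]
    have hz2 : ∑ m ∈ Finset.range M, Gm M a (M + m) * (starRingEnd ℂ) (Gm M b (M + m)) = 0 :=
      Finset.sum_eq_zero fun m hm => by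
        rw [Gm_zero_left M b (M + m) hbM (by omega), map_zero, mul_zero]
    rw [hz1, hz2, add_zero]
  · -- both ≥ M
    have hz1 : ∑ m ∈ Finset.range M, Gm M a m * (starRingEnd ℂ) (Gm M b m) = 0 :=
      Finset.sum_eq_zero fun m hm => by
        rw [Gm_zero_right M a m haM (Finset.mem_range.1 hm), zero_mul]
    have hGm : ∀ c : ℕ, M ≤ c → c < 2 * M → ∀ m, m < M →
        Gm M c (M + m) = Complex.exp (-2 * Real.pi * Complex.I * ((c - M : ℕ) : ℂ) * m / M) /
          Real.sqrt M := by
      intro c hc hc2 m hm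
      unfold Gm
      rw [if_neg (by omega), if_pos ⟨hc, by omega⟩]
      congr 2
      rw [Nat.cast_sub hc]
      push_cast
      ring
    have h2 : ∑ m ∈ Finset.range M, Gm M a (M + m) * (starRingEnd ℂ) (Gm M b (M + m))
        = if a - M = b - M then 1 else 0 := by
      have hc : ∀ m ∈ Finset.range M, Gm M a (M + m) * (starRingEnd ℂ) (Gm M b (M + m))
          = (Complex.exp (-2 * Real.pi * Complex.I * ((a - M : ℕ) : ℂ) * m / M) / Real.sqrt M) *
            (starRingEnd ℂ) (Complex.exp (-2 * Real.pi * Complex.I * ((b - M : ℕ) : ℂ) * m / M) /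
              Real.sqrt M) := by
        intro m hm
        rw [hGm a haM ha m (Finset.mem_range.1 hm), hGm b hbM hb m (Finset.mem_range.1 hm)]
      rw [Finset.sum_congr rfl hc]
      exact dft_orth_neg M hM (a - M) (b - M) (by omega) (by omega)
    rw [hz1, h2, zero_add]
    by_cases h : a = b
    · rw [if_pos (by omega), if_pos h]
    · rw [if_neg (by omega), if_neg h]

lemma Am_orth (M : ℕ) (hM : 0 < M) (n n' : ℕ) (hn : n < 2 * M) (hn' : n' < 2 * M) :
    ∑ m ∈ Finset.range (2 * M), Am M n m * (starRingEnd ℂ) (Am M n' m) =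
      if n = n' then 1 else 0 := by
  have expand : ∀ m ∈ Finset.range (2 * M), Am M n m * (starRingEnd ℂ) (Am M n' m)
      = ∑ a ∈ Finset.range (2 * M), ∑ b ∈ Finset.range (2 * M),
          (Fi M n a * (starRingEnd ℂ) (Fi M n' b)) * (Gm M a m * (starRingEnd ℂ) (Gm M b m)) := by
    intro m _
    unfold Am
    rw [map_sum, Finset.sum_mul_sum]
    refine Finset.sum_congr rfl fun a _ => Finset.sum_congr rfl fun b _ => ?_
    rw [map_mul]
    ring
  rw [Finset.sum_congr rfl expand, Finset.sum_comm]
  have step : ∀ a ∈ Finset.range (2 * M),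
      (∑ m ∈ Finset.range (2 * M), ∑ b ∈ Finset.range (2 * M),
        (Fi M n a * (starRingEnd ℂ) (Fi M n' b)) * (Gm M a m * (starRingEnd ℂ) (Gm M b m)))
      = Fi M n a * (starRingEnd ℂ) (Fi M n' a) := by
    intro a ha
    rw [Finset.sum_comm]
    have inner : ∀ b ∈ Finset.range (2 * M),
        (∑ m ∈ Finset.range (2 * M),
          (Fi M n a * (starRingEnd ℂ) (Fi M n' b)) * (Gm M a m * (starRingEnd ℂ) (Gm M b m)))
        = if a = b then Fi M n a * (starRingEnd ℂ) (Fi M n' b) else 0 := by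
      intro b hb
      rw [← Finset.mul_sum, Gm_orth M hM a b (Finset.mem_range.1 ha) (Finset.mem_range.1 hb),
        mul_ite, mul_one, mul_zero]
    rw [Finset.sum_congr rfl inner, Finset.sum_ite_eq, if_pos ha]
  rw [Finset.sum_congr rfl step]
  have hc : ∀ a ∈ Finset.range (2 * M), Fi M n a * (starRingEnd ℂ) (Fi M n' a)
      = (Complex.exp (2 * Real.pi * Complex.I * n * a / ((2 * M : ℕ) : ℂ)) /
          Real.sqrt ((2 * M : ℕ) : ℝ)) *
        (starRingEnd ℂ) (Complex.exp (2 * Real.pi * Complex.I * n' * a / ((2 * M : ℕ) : ℂ)) /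
          Real.sqrt ((2 * M : ℕ) : ℝ)) := by
    intro a _
    unfold Fi
    norm_cast
  rw [Finset.sum_congr rfl hc]
  exact dft_orth_pos (2 * M) (by omega) n n' hn hn'

noncomputable def ph (M n m : ℕ) : ℂ :=
  if m < M then Complex.exp (Real.pi * Complex.I * ((n : ℂ) - 2 * m) / (2 * M))
  else Complex.exp (Real.pi * Complex.I * ((n : ℂ) - (2 * (m : ℂ) - 2 * M)) / (2 * M))

lemma ph_shift (M n m : ℕ) (hm : m < M) : ph M n (M + m) = ph M n m := by
  unfold ph
  rw [if_neg (by omega), if_pos hm]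
  congr 1
  push_cast
  ring

lemma ph_mul_conj (M n n' m : ℕ) :
    ph M n m * (starRingEnd ℂ) (ph M n' m)
      = Complex.exp (Real.pi * Complex.I * ((n : ℂ) - n') / (2 * M)) := by
  unfold ph
  by_cases h : m < M <;>
  · simp only [if_pos, if_neg, h, if_true, if_false]
    rw [← Complex.exp_conj, ← Complex.exp_add]
    congr 1
    simp only [map_div₀, map_mul, map_sub, map_add, Complex.conj_I, Complex.conj_ofReal,
      map_ofNat, Complex.conj_natCast]
    ring

lemma sum_split (K : ℕ) (f : ℕ → ℂ) :
    ∑ a ∈ Finset.range (2 * K), f a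
      = ∑ a ∈ Finset.range K, f a + ∑ a ∈ Finset.range K, f (K + a) := by
  rw [two_mul, Finset.sum_range_add]

lemma cross_sum (M : ℕ) (hM : 0 < M) (n n' : ℕ) (he : Even n) (ho : ¬ Even n') :
    ∑ m ∈ Finset.range (2 * M), Am M n m * (starRingEnd ℂ) (ph M n' m * Am M n' m) = 0 := by
  set C : ℕ → ℂ := fun m => (starRingEnd ℂ) (ph M n' m * Am M n' m) with hCdef
  have hC : ∀ m, m < M → C (M + m) = -C m := by
    intro m hm
    show (starRingEnd ℂ) (ph M n' (M + m) * Am M n' (M + m)) = _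
    rw [ph_shift M n' m hm, Am_shift M n' m hM hm, exp_pi_odd (Nat.not_even_iff_odd.1 ho),
      show ph M n' m * (-1 * Am M n' m) = -(ph M n' m * Am M n' m) by ring, map_neg]
  set h : ℕ → ℂ := fun a => ∑ m ∈ Finset.range (2 * M), Gm M a m * C m with hhdef
  have expand : ∑ m ∈ Finset.range (2 * M), Am M n m * C m
      = ∑ a ∈ Finset.range (2 * M), Fi M n a * h a := by
    unfold Am
    simp only [Finset.sum_mul]
    rw [Finset.sum_comm]
    refine Finset.sum_congr rfl fun a _ => ?_
    rw [hhdef, Finset.mul_sum]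
    exact Finset.sum_congr rfl fun m _ => by ring
  rw [expand, sum_split]
  have hsplit : ∀ a, a < M → h (M + a) = -h a := by
    intro a ha
    rw [hhdef]
    simp only []
    rw [sum_split, sum_split]
    have z1 : ∑ m ∈ Finset.range M, Gm M (M + a) m * C m = 0 :=
      Finset.sum_eq_zero fun m hm => by
        rw [Gm_zero_right M (M + a) m (by omega) (Finset.mem_range.1 hm), zero_mul]
    have z2 : ∑ m ∈ Finset.range M, Gm M a (M + m) * C (M + m) = 0 :=
      Finset.sum_eq_zero fun m hm => by
        rw [Gm_zero_left M a (M + m) ha (by omega), zero_mul]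
    have e1 : ∑ m ∈ Finset.range M, Gm M (M + a) (M + m) * C (M + m)
        = -∑ m ∈ Finset.range M, Gm M a m * C m := by
      rw [← Finset.sum_neg_distrib]
      refine Finset.sum_congr rfl fun m hm => ?_
      rw [Gm_shift M a m ha (Finset.mem_range.1 hm), hC m (Finset.mem_range.1 hm)]
      ring
    rw [z1, z2, e1, zero_add, add_zero]
  have hFi : ∀ a, Fi M n (M + a) = Fi M n a := by
    intro a
    rw [Fi_shift M n a hM, exp_pi_even he, one_mul]
  rw [← Finset.sum_add_distrib]
  refine Finset.sum_eq_zero fun a ha => ?_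
  rw [hFi a, hsplit a (Finset.mem_range.1 ha)]
  ring

lemma baker_apply (M : ℕ) (n m : Fin (2 * M)) :
    bakerMatrix M n m
      = (if Even (n : ℕ) then 1 else ph M (n : ℕ) (m : ℕ)) * Am M (n : ℕ) (m : ℕ) := by
  have hsum : (∑ a : Fin (2 * M),
        (Complex.exp (2 * Real.pi * Complex.I * n * a / (2 * M)) / Real.sqrt (2 * M)) *
          fourierBlock M a m) = Am M (n : ℕ) (m : ℕ) := by
    have h1 : ∀ a : Fin (2 * M),
        (Complex.exp (2 * Real.pi * Complex.I * n * a / (2 * M)) / Real.sqrt (2 * M)) *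
          fourierBlock M a m = (fun x : ℕ => Fi M (n : ℕ) x * Gm M x (m : ℕ)) (a : ℕ) :=
      fun a => rfl
    rw [Finset.sum_congr rfl fun a _ => h1 a,
      Fin.sum_univ_eq_sum_range (fun x : ℕ => Fi M (n : ℕ) x * Gm M x (m : ℕ)) (2 * M)]
    rfl
  show (if Even (n : ℕ) then (1 : ℂ) else _) * _ = _
  rw [hsum]
  rfl

/-- The corrected Balazs–Voros matrix is unitary. -/
theorem bakerMatrix_unitary (M : ℕ) (hM : 0 < M) :
    bakerMatrix M ∈ Matrix.unitaryGroup (Fin (2 * M)) ℂ := by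
  rw [Matrix.mem_unitaryGroup_iff]
  have hBapply : ∀ n n' : Fin (2 * M),
      (bakerMatrix M * star (bakerMatrix M)) n n'
        = ∑ m ∈ Finset.range (2 * M),
            ((if Even ((n : ℕ)) then 1 else ph M (n : ℕ) m) * Am M (n : ℕ) m) *
              (starRingEnd ℂ)
                ((if Even ((n' : ℕ)) then 1 else ph M (n' : ℕ) m) * Am M (n' : ℕ) m) := by
    intro n n'
    rw [Matrix.mul_apply]
    have h1 : ∀ m : Fin (2 * M), bakerMatrix M n m * (star (bakerMatrix M)) m n'
        = (fun x : ℕ => ((if Even ((n : ℕ)) then 1 else ph M (n : ℕ) x) * Am M (n : ℕ) x) *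
            (starRingEnd ℂ)
              ((if Even ((n' : ℕ)) then 1 else ph M (n' : ℕ) x) * Am M (n' : ℕ) x)) (m : ℕ) := by
      intro m
      rw [Matrix.star_apply, baker_apply, baker_apply]
      rfl
    rw [Finset.sum_congr rfl fun m _ => h1 m]
    exact Fin.sum_univ_eq_sum_range
      (fun x : ℕ => ((if Even ((n : ℕ)) then 1 else ph M (n : ℕ) x) * Am M (n : ℕ) x) *
        (starRingEnd ℂ)
          ((if Even ((n' : ℕ)) then 1 else ph M (n' : ℕ) x) * Am M (n' : ℕ) x)) (2 * M)
  have main : ∀ n n' : Fin (2 * M), ¬(¬Even ((n : ℕ)) ∧ Even ((n' : ℕ))) →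
      (bakerMatrix M * star (bakerMatrix M)) n n'
        = (1 : Matrix (Fin (2 * M)) (Fin (2 * M)) ℂ) n n' := by
    intro n n' hcase
    rw [hBapply, Matrix.one_apply]
    by_cases he : Even ((n : ℕ)) <;> by_cases he' : Even ((n' : ℕ))
    · simp only [he, he', if_true]
      have hc : ∀ m ∈ Finset.range (2 * M),
          ((1 : ℂ) * Am M (n : ℕ) m) * (starRingEnd ℂ) ((1 : ℂ) * Am M (n' : ℕ) m)
            = Am M (n : ℕ) m * (starRingEnd ℂ) (Am M (n' : ℕ) m) := by
        intro m _
        rw [one_mul, one_mul]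
      rw [Finset.sum_congr rfl hc, Am_orth M hM _ _ n.isLt n'.isLt]
      simp only [Fin.val_inj]
    · simp only [he, he', if_true, if_false]
      have hc : ∀ m ∈ Finset.range (2 * M),
          ((1 : ℂ) * Am M (n : ℕ) m) * (starRingEnd ℂ) (ph M (n' : ℕ) m * Am M (n' : ℕ) m)
            = Am M (n : ℕ) m * (starRingEnd ℂ) (ph M (n' : ℕ) m * Am M (n' : ℕ) m) := by
        intro m _
        rw [one_mul]
      rw [Finset.sum_congr rfl hc, cross_sum M hM _ _ he he', if_neg]
      intro hnn
      rw [hnn] at he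
      exact he' he
    · exact absurd ⟨he, he'⟩ hcase
    · simp only [he, he', if_false]
      have hc : ∀ m ∈ Finset.range (2 * M),
          (ph M (n : ℕ) m * Am M (n : ℕ) m) *
              (starRingEnd ℂ) (ph M (n' : ℕ) m * Am M (n' : ℕ) m)
            = Complex.exp (Real.pi * Complex.I * (((n : ℕ) : ℂ) - ((n' : ℕ) : ℂ)) / (2 * M)) *
                (Am M (n : ℕ) m * (starRingEnd ℂ) (Am M (n' : ℕ) m)) := by
        intro m _
        rw [map_mul, ← ph_mul_conj M (n : ℕ) (n' : ℕ) m]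
        ring
      rw [Finset.sum_congr rfl hc, ← Finset.mul_sum, Am_orth M hM _ _ n.isLt n'.isLt]
      by_cases h : n = n'
      · rw [if_pos (Fin.val_inj.2 h), if_pos h, mul_one, h]
        simp
      · rw [if_neg (fun hv => h (Fin.val_inj.1 hv)), if_neg h, mul_zero]
  ext n n'
  by_cases hcase : ¬Even ((n : ℕ)) ∧ Even ((n' : ℕ))
  · have h1 := main n' n (by
      push_neg
      intro hcontra
      exact absurd hcase.2 hcontra)
    have hsym : (bakerMatrix M * star (bakerMatrix M)) n n'
        = (starRingEnd ℂ) ((bakerMatrix M * star (bakerMatrix M)) n' n) := by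
      have hH : Matrix.conjTranspose (bakerMatrix M * star (bakerMatrix M))
          = bakerMatrix M * star (bakerMatrix M) := by
        rw [Matrix.star_eq_conjTranspose, Matrix.conjTranspose_mul,
          Matrix.conjTranspose_conjTranspose]
      have h2 := congrFun (congrFun hH n) n'
      rw [Matrix.conjTranspose_apply] at h2
      rw [← h2]
      rfl
    rw [hsym, h1, Matrix.one_apply, Matrix.one_apply]
    by_cases h : n = n'
    · rw [if_pos h.symm, if_pos h, map_one]
    · rw [if_neg (fun hv => h hv.symm), if_neg h, map_zero]
  · exact main n n' hcase
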